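/- Let g : ℝⁿ → ℝ be convex differentiable with L_g-Lipschitz gradient, D nonexpansive, τ > 0, G = ∇g + τ(I - D) with a zero x* satisfying ‖x⁰ - x*‖ ≤ R₀. Run the iteration x^k = x^{k-1} - γG(x^{k-1}) with 0 < γ ≤ 1/(L_g + 2τ). Then for all t ≥ 1, ‖G(x^{t-1})‖² ≤ ((L_g + 2τ)/(γt))R₀². -/

import Mathlib

/-!
The operator `G = ∇g + τ (I - D)` is `1/(L_g + 2τ)`-cocoercive: `∇g` is `1/L_g`-cocoercive by
the Baillon–Haddad theorem, `I - D` is `1/2`-cocoercive because `D` is nonexpansive, and the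
inverse moduli of cocoercive operators add. For a `1/L`-cocoercive operator and a step
`γ ≤ 1/L`, each gradient step decreases `L ‖x - x*‖²` by at least `γ ‖G x‖²` and does not increase
`‖G x‖`. Summing the first estimate over `t` steps and using the second,
`γ t ‖G(x^{t-1})‖² ≤ L ‖x⁰ - x*‖²`.
-/

open RealInnerProductSpace Set

section Cocoercive

variable {F : Type*} [NormedAddCommGroup F] [InnerProductSpace ℝ F]

/-- `T` is `1/L`-cocoercive; the modulus is stored inverted so that `L` plays the role of a
Lipschitz constant. -/
def CocoerciveWith (L : ℝ) (T : F → F) : Prop :=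
  ∀ x y, ‖T x - T y‖ ^ 2 ≤ L * ⟪T x - T y, x - y⟫

theorem mul_mul_norm_add_sq_le (L₁ L₂ : ℝ) (a b : F) :
    L₁ * L₂ * ‖a + b‖ ^ 2 ≤ (L₁ + L₂) * (L₂ * ‖a‖ ^ 2 + L₁ * ‖b‖ ^ 2) := by
  have hdefect : (L₁ + L₂) * (L₂ * ‖a‖ ^ 2 + L₁ * ‖b‖ ^ 2) - L₁ * L₂ * ‖a + b‖ ^ 2
      = ‖L₂ • a - L₁ • b‖ ^ 2 := by
    rw [norm_add_sq_real, norm_sub_sq_real, norm_smul, norm_smul, real_inner_smul_left,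
      real_inner_smul_right, mul_pow, mul_pow, Real.norm_eq_abs, Real.norm_eq_abs, sq_abs, sq_abs]
    ring
  nlinarith [sq_nonneg ‖L₂ • a - L₁ • b‖]

namespace CocoerciveWith

variable {L L₁ L₂ γ : ℝ} {T A B : F → F}

theorem smul (hT : CocoerciveWith L T) {c : ℝ} (hc : 0 ≤ c) : CocoerciveWith (c * L) (c • T) := by
  intro x y
  have h := mul_le_mul_of_nonneg_left (hT x y) (sq_nonneg c)
  simp only [Pi.smul_apply, ← smul_sub, norm_smul, real_inner_smul_left, mul_pow,
    Real.norm_of_nonneg hc]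
  linarith

theorem add (hA : CocoerciveWith L₁ A) (hB : CocoerciveWith L₂ B) (h₁ : 0 < L₁) (h₂ : 0 < L₂) :
    CocoerciveWith (L₁ + L₂) (A + B) := by
  intro x y
  have hsum : (A + B) x - (A + B) y = (A x - A y) + (B x - B y) := by
    simp only [Pi.add_apply]; abel
  have hbound : L₁ * L₂ * ‖(A + B) x - (A + B) y‖ ^ 2
      ≤ L₁ * L₂ * ((L₁ + L₂) * ⟪(A + B) x - (A + B) y, x - y⟫) := by
    rw [hsum, inner_add_left]
    calc L₁ * L₂ * ‖(A x - A y) + (B x - B y)‖ ^ 2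
        ≤ (L₁ + L₂) * (L₂ * ‖A x - A y‖ ^ 2 + L₁ * ‖B x - B y‖ ^ 2) :=
          mul_mul_norm_add_sq_le _ _ _ _
      _ ≤ (L₁ + L₂) * (L₂ * (L₁ * ⟪A x - A y, x - y⟫) + L₁ * (L₂ * ⟪B x - B y, x - y⟫)) := by
          gcongr
          exacts [hA x y, hB x y]
      _ = _ := by ring
  exact le_of_mul_le_mul_left hbound (by positivity)

theorem id_sub_of_lipschitzWith_one {D : F → F} (hD : LipschitzWith 1 D) :
    CocoerciveWith 2 (id - D : F → F) := by
  intro x y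
  have hsub : (x - D x) - (y - D y) = (x - y) - (D x - D y) := by abel
  have hD' : ‖D x - D y‖ ≤ ‖x - y‖ := by simpa using hD.norm_sub_le x y
  change ‖(x - D x) - (y - D y)‖ ^ 2 ≤ 2 * ⟪(x - D x) - (y - D y), x - y⟫
  rw [hsub]
  generalize x - y = u at hD' ⊢
  generalize D x - D y = v at hD' ⊢
  -- `2 ⟪u - v, u⟫ - ‖u - v‖² = ‖u‖² - ‖v‖²`
  rw [norm_sub_sq_real, inner_sub_left, real_inner_self_eq_norm_sq, real_inner_comm]
  nlinarith [norm_nonneg v]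

theorem mul_sq_norm_sub_smul_le (hT : CocoerciveWith L T) (hγ : 0 ≤ γ) (x y : F) :
    L * ‖(x - γ • T x) - (y - γ • T y)‖ ^ 2 + γ * (2 - γ * L) * ‖T x - T y‖ ^ 2
      ≤ L * ‖x - y‖ ^ 2 := by
  have hsub : (x - γ • T x) - (y - γ • T y) = (x - y) - γ • (T x - T y) := by
    rw [smul_sub]; abel
  have hcoco := mul_le_mul_of_nonneg_left (hT x y) hγ
  rw [hsub, norm_sub_sq_real, real_inner_smul_right, norm_smul, Real.norm_of_nonneg hγ,
    real_inner_comm]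
  nlinarith

theorem norm_apply_sub_smul_le (hT : CocoerciveWith L T) (hγ : 0 < γ) (hL : 0 < L)
    (hγL : γ * L ≤ 2) (x : F) : ‖T (x - γ • T x)‖ ≤ ‖T x‖ := by
  set y := x - γ • T x
  have h := hT.mul_sq_norm_sub_smul_le hγ.le x y
  have hstep : x - γ • T x - (y - γ • T y) = γ • T y := by simp only [y]; abel
  have hxy : x - y = γ • T x := by simp only [y]; abel
  rw [hstep, hxy, norm_smul, norm_smul, Real.norm_of_nonneg hγ.le] at h
  have hsq : L * γ ^ 2 * ‖T y‖ ^ 2 ≤ L * γ ^ 2 * ‖T x‖ ^ 2 := by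
    nlinarith [mul_nonneg (mul_nonneg hγ.le (sub_nonneg.mpr hγL)) (sq_nonneg ‖T x - T y‖)]
  have := le_of_mul_le_mul_left hsq (by positivity)
  exact (pow_le_pow_iff_left₀ (norm_nonneg _) (norm_nonneg _) two_ne_zero).mp this

theorem mul_sq_norm_sub_smul_sub_le (hT : CocoerciveWith L T) (hγ : 0 ≤ γ)
    (hγL : γ * L ≤ 1) {xs : F} (hxs : T xs = 0) (x : F) :
    L * ‖x - γ • T x - xs‖ ^ 2 + γ * ‖T x‖ ^ 2 ≤ L * ‖x - xs‖ ^ 2 := by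
  have h := hT.mul_sq_norm_sub_smul_le hγ x xs
  rw [hxs, smul_zero, sub_zero, sub_zero] at h
  nlinarith [mul_nonneg hγ (sq_nonneg ‖T x‖)]

section Iteration

variable {x : ℕ → F} {xs : F}

theorem mul_sq_norm_iterate_add_le (hT : CocoerciveWith L T) (hγ : 0 < γ) (hL : 0 < L)
    (hγL : γ * L ≤ 1) (hx : ∀ k, x (k + 1) = x k - γ • T (x k)) (hxs : T xs = 0) (s : ℕ) :
    L * ‖x (s + 1) - xs‖ ^ 2 + γ * (s + 1) * ‖T (x s)‖ ^ 2 ≤ L * ‖x 0 - xs‖ ^ 2 := by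
  induction s with
  | zero => simpa [hx 0] using hT.mul_sq_norm_sub_smul_sub_le hγ.le hγL hxs (x 0)
  | succ s ih =>
    have hdist := hT.mul_sq_norm_sub_smul_sub_le hγ.le hγL hxs (x (s + 1))
    have hres : ‖T (x (s + 1))‖ ^ 2 ≤ ‖T (x s)‖ ^ 2 := by
      rw [hx s]
      exact pow_le_pow_left₀ (norm_nonneg _)
        (hT.norm_apply_sub_smul_le hγ hL (by linarith) (x s)) 2
    rw [← hx (s + 1)] at hdist
    push_cast
    nlinarith [mul_le_mul_of_nonneg_left hres (by positivity : (0 : ℝ) ≤ γ * (s + 1))]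

theorem mul_sq_norm_iterate_le (hT : CocoerciveWith L T) (hγ : 0 < γ) (hL : 0 < L)
    (hγL : γ * L ≤ 1) (hx : ∀ k, x (k + 1) = x k - γ • T (x k)) (hxs : T xs = 0) (s : ℕ) :
    γ * (s + 1) * ‖T (x s)‖ ^ 2 ≤ L * ‖x 0 - xs‖ ^ 2 := by
  nlinarith [hT.mul_sq_norm_iterate_add_le hγ hL hγL hx hxs s, sq_nonneg ‖x (s + 1) - xs‖]

end Iteration

end CocoerciveWith

end Cocoercive

section Gradient

variable {F : Type*} [NormedAddCommGroup F] [InnerProductSpace ℝ F] [CompleteSpace F]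
  {g : F → ℝ}

theorem HasGradientAt.hasDerivAt_comp_add_smul {g₀ x d : F} {t : ℝ}
    (h : HasGradientAt g g₀ (x + t • d)) :
    HasDerivAt (fun s : ℝ => g (x + s • d)) ⟪g₀, d⟫ t := by
  have hline : HasDerivAt (fun s : ℝ => x + s • d) d t := by
    simpa using ((hasDerivAt_id t).smul_const d).const_add x
  have hcomp := (hasGradientAt_iff_hasFDerivAt.mp h).comp_hasDerivAt t hline
  simp only [InnerProductSpace.toDual_apply_apply] at hcomp
  exact hcomp

theorem ConvexOn.add_inner_le_of_hasGradientAt (hconv : ConvexOn ℝ univ g) {g₀ x : F}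
    (hx : HasGradientAt g g₀ x) (y : F) : g x + ⟪g₀, y - x⟫ ≤ g y := by
  have hline : ConvexOn ℝ univ fun t : ℝ => g (x + t • (y - x)) := by
    have hcomp : (fun t : ℝ => g (x + t • (y - x))) = g ∘ AffineMap.lineMap x y := by
      funext t
      simp [AffineMap.lineMap_apply, add_comm]
    simpa [hcomp] using hconv.comp_affineMap (AffineMap.lineMap x y)
  have hslope := hline.le_slope_of_hasDerivAt (mem_univ 0) (mem_univ 1) one_pos
    (by simpa using hx : HasGradientAt g g₀ (x + (0 : ℝ) • (y - x))).hasDerivAt_comp_add_smul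
  simp only [slope_def_field, one_smul, add_sub_cancel, zero_smul, add_zero, sub_zero,
    div_one] at hslope
  linarith

theorem LipschitzWith.le_add_inner_add_sq_of_hasGradientAt {g' : F → F} {L : NNReal}
    (hlip : LipschitzWith L g') (hgrad : ∀ x, HasGradientAt g (g' x) x) (x y : F) :
    g y ≤ g x + ⟪g' x, y - x⟫ + L / 2 * ‖y - x‖ ^ 2 := by
  set d := y - x
  have hderiv (t : ℝ) : HasDerivAt (fun s : ℝ => g (x + s • d)) ⟪g' (x + t • d), d⟫ t :=
    (hgrad _).hasDerivAt_comp_add_smul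
  have hbound (t : ℝ) (ht : t ∈ Ico (0 : ℝ) 1) :
      ⟪g' (x + t • d), d⟫ ≤ ⟪g' x, d⟫ + L * t * ‖d‖ ^ 2 := by
    have hdist : ‖g' (x + t • d) - g' x‖ ≤ L * (t * ‖d‖) := by
      simpa [norm_smul, abs_of_nonneg ht.1] using hlip.norm_sub_le (x + t • d) x
    calc ⟪g' (x + t • d), d⟫ = ⟪g' x, d⟫ + ⟪g' (x + t • d) - g' x, d⟫ := by
          rw [inner_sub_left]; ring
      _ ≤ ⟪g' x, d⟫ + ‖g' (x + t • d) - g' x‖ * ‖d‖ := by gcongr; exact real_inner_le_norm _ _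
      _ ≤ ⟪g' x, d⟫ + L * (t * ‖d‖) * ‖d‖ := by gcongr
      _ = ⟪g' x, d⟫ + L * t * ‖d‖ ^ 2 := by ring
  have hquad (t : ℝ) : HasDerivAt (fun s : ℝ => g x + s * ⟪g' x, d⟫ + L / 2 * s ^ 2 * ‖d‖ ^ 2)
      (⟪g' x, d⟫ + L * t * ‖d‖ ^ 2) t := by
    have h := (((hasDerivAt_id t).mul_const ⟪g' x, d⟫).const_add (g x)).add
      (((hasDerivAt_pow 2 t).const_mul (L / 2 : ℝ)).mul_const (‖d‖ ^ 2))
    exact h.congr_deriv (by push_cast; ring)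
  have h := image_le_of_deriv_right_le_deriv_boundary
    (fun t _ => (hderiv t).continuousAt.continuousWithinAt)
    (fun t _ => (hderiv t).hasDerivWithinAt) (by simp)
    (fun t _ => (hquad t).continuousAt.continuousWithinAt)
    (fun t _ => (hquad t).hasDerivWithinAt) hbound (right_mem_Icc.mpr zero_le_one)
  simpa [d] using h

theorem ConvexOn.add_inner_add_sq_norm_sub_le {g' : F → F} {L : NNReal} (hL : 0 < L)
    (hconv : ConvexOn ℝ univ g) (hgrad : ∀ x, HasGradientAt g (g' x) x)
    (hlip : LipschitzWith L g') (p q : F) :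
    g p + ⟪g' p, q - p⟫ + ‖g' q - g' p‖ ^ 2 / (2 * L) ≤ g q := by
  -- Baillon–Haddad trick: bound `g z` from below at `p` and from above at `q`.
  set u := g' q - g' p
  set z := q - (L : ℝ)⁻¹ • u
  have hL' : (0 : ℝ) < L := hL
  have hfirst := hconv.add_inner_le_of_hasGradientAt (hgrad p) z
  have hdescent := hlip.le_add_inner_add_sq_of_hasGradientAt hgrad q z
  have hzq : z - q = -((L : ℝ)⁻¹ • u) := by simp [z]
  have hzp : z - p = (q - p) + (z - q) := by abel
  have hinner : ⟪g' q, z - q⟫ - ⟪g' p, z - q⟫ = -(L : ℝ)⁻¹ * ‖u‖ ^ 2 := by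
    rw [← inner_sub_left, hzq, inner_neg_right, real_inner_smul_right,
      real_inner_self_eq_norm_sq]
    ring
  have hnorm : ‖z - q‖ ^ 2 = (L : ℝ)⁻¹ ^ 2 * ‖u‖ ^ 2 := by
    rw [hzq, norm_neg, norm_smul, mul_pow, Real.norm_of_nonneg (by positivity)]
  rw [hzp, inner_add_right] at hfirst
  rw [hnorm] at hdescent
  have hconst : (L : ℝ) / 2 * ((L : ℝ)⁻¹ ^ 2 * ‖u‖ ^ 2) - (L : ℝ)⁻¹ * ‖u‖ ^ 2
      = -(‖u‖ ^ 2 / (2 * L)) := by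
    field_simp; ring
  linarith

theorem ConvexOn.cocoerciveWith_gradient {g' : F → F} {L : NNReal} (hL : 0 < L)
    (hconv : ConvexOn ℝ univ g) (hgrad : ∀ x, HasGradientAt g (g' x) x)
    (hlip : LipschitzWith L g') : CocoerciveWith L g' := by
  intro a b
  have hab := hconv.add_inner_add_sq_norm_sub_le hL hgrad hlip a b
  have hba := hconv.add_inner_add_sq_norm_sub_le hL hgrad hlip b a
  rw [norm_sub_rev] at hab
  have hsum : ‖g' a - g' b‖ ^ 2 / L ≤ ⟪g' a - g' b, a - b⟫ := by
    have hinner : ⟪g' a - g' b, a - b⟫ = -(⟪g' a, b - a⟫ + ⟪g' b, a - b⟫) := by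
      rw [inner_sub_left, ← neg_sub a b, inner_neg_right]; ring
    have hhalf : ‖g' a - g' b‖ ^ 2 / L = 2 * (‖g' a - g' b‖ ^ 2 / (2 * L)) := by
      field_simp
    linarith
  rwa [div_le_iff₀' (by exact_mod_cast hL)] at hsum

end Gradient

theorem msred_convergence {n : ℕ} (g : EuclideanSpace ℝ (Fin n) → ℝ)
    (g' D : EuclideanSpace ℝ (Fin n) → EuclideanSpace ℝ (Fin n)) (Lg τ : ℝ)
    (hL : 0 < Lg) (hτ : 0 < τ)
    (hconv : ConvexOn ℝ Set.univ g)
    (hgrad : ∀ x, HasGradientAt g (g' x) x)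
    (hlip : ∀ x y, ‖g' x - g' y‖ ≤ Lg * ‖x - y‖)
    (hD : ∀ x y, ‖D x - D y‖ ≤ ‖x - y‖)
    (G : EuclideanSpace ℝ (Fin n) → EuclideanSpace ℝ (Fin n))
    (hG : ∀ x, G x = g' x + τ • (x - D x))
    (xs : EuclideanSpace ℝ (Fin n)) (hxs : G xs = 0)
    (γ : ℝ) (hγ : 0 < γ) (hγ' : γ ≤ 1 / (Lg + 2 * τ))
    (x : ℕ → EuclideanSpace ℝ (Fin n))
    (hx : ∀ k : ℕ, x (k + 1) = x k - γ • G (x k))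
    (R₀ : ℝ) (hR₀ : ‖x 0 - xs‖ ≤ R₀) :
    ∀ t : ℕ, 1 ≤ t →
      ‖G (x (t - 1))‖ ^ 2 ≤ ((Lg + 2 * τ) / (γ * t)) * R₀ ^ 2 := by
  intro t ht
  have hlip' : LipschitzWith Lg.toNNReal g' := LipschitzWith.of_dist_le_mul fun a b => by
    simpa [dist_eq_norm, Real.coe_toNNReal _ hL.le] using hlip a b
  have hD' : LipschitzWith 1 D := LipschitzWith.of_dist_le_mul fun a b => by
    simpa [dist_eq_norm] using hD a b
  have hGsplit : G = g' + τ • (id - D) := funext hG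
  have hcoco : CocoerciveWith (Lg + 2 * τ) G := by
    have hLg : 0 < Lg.toNNReal := Real.toNNReal_pos.mpr hL
    have h := (hconv.cocoerciveWith_gradient hLg hgrad hlip').add
      ((CocoerciveWith.id_sub_of_lipschitzWith_one hD').smul hτ.le) hLg (by positivity)
    rwa [Real.coe_toNNReal _ hL.le, mul_comm, ← hGsplit] at h
  have hγL : γ * (Lg + 2 * τ) ≤ 1 := by rwa [le_div_iff₀ (by positivity)] at hγ'
  obtain ⟨s, rfl⟩ := Nat.exists_eq_add_of_le' ht
  have h := hcoco.mul_sq_norm_iterate_le hγ (by positivity) hγL hx hxs s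
  rw [Nat.add_sub_cancel, div_mul_eq_mul_div, le_div_iff₀ (by positivity)]
  push_cast
  nlinarith [pow_le_pow_left₀ (norm_nonneg _) hR₀ 2]
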